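/- Let μ, ν ∈ 𝒫(ℝ) with μ ≼_cx ν (increasing convex order), and for n ∈ ℕ let μⁿ, νⁿ be the grid discretisations defined by μⁿ({k/n}) := ∫_{[(k−1)/n,(k+1)/n)} (1 − |nx − k|) μ(dx) and likewise for νⁿ. Then μⁿ ≼_cx νⁿ. -/

import Mathlib

open MeasureTheory Filter

namespace MMOT

/-- Weight of the discretisation of `μ` at the grid point `k/n`:
`∫_{[(k−1)/n,(k+1)/n)} (1 − |nx − k|) μ(dx)`. -/
noncomputable def gridWeight (μ : Measure ℝ) (n : ℕ) (k : ℤ) : ℝ :=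
  ∫ x in Set.Ico (((k : ℝ) - 1) / n) (((k : ℝ) + 1) / n), (1 - |(n : ℝ) * x - (k : ℝ)|) ∂μ

/-- The grid discretisation `μⁿ` of `μ`, supported on `{k/n : k ∈ ℤ}`. -/
noncomputable def gridDisc (μ : Measure ℝ) (n : ℕ) : Measure ℝ :=
  Measure.sum fun k : ℤ => ENNReal.ofReal (gridWeight μ n k) • Measure.dirac ((k : ℝ) / n)

/-- The convex order `μ ≼_cx ν` on probability measures on `ℝ`:
`∫ f dμ ≤ ∫ f dν` for all (integrable) convex functions `f`. -/
def ConvexOrder (μ ν : Measure ℝ) : Prop :=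
  ∀ f : ℝ → ℝ, ConvexOn ℝ Set.univ f → Integrable f μ → Integrable f ν →
    ∫ x, f x ∂μ ≤ ∫ x, f x ∂ν

/-! The tent functions `x ↦ (1 - |n x - k|)⁺` form a partition of unity subordinate to the grid
`ℤ / n`, so `∫ f dμⁿ = ∑ₖ μⁿ{k/n} f(k/n) = ∫ Iₙf dμ`, where `Iₙf` is the piecewise-linear
interpolation of `f` at the grid points. If `f` is convex, so is `Iₙf`: on each cell it agrees
with a secant line of `f` over two consecutive grid points, and every such secant line lies below
`f` at all grid points, hence below `Iₙf` everywhere. The convex order for `μ, ν` applied to `Iₙf`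
then gives the convex order for `μⁿ, νⁿ`. -/

noncomputable def tent (n : ℕ) (k : ℤ) : ℝ → ℝ :=
  (Set.Ico (((k : ℝ) - 1) / n) (((k : ℝ) + 1) / n)).indicator
    (fun x => 1 - |(n : ℝ) * x - (k : ℝ)|)

noncomputable def interp (f : ℝ → ℝ) (n : ℕ) (x : ℝ) : ℝ :=
  (1 - Int.fract ((n : ℝ) * x)) * f (⌊(n : ℝ) * x⌋ / n) +
    Int.fract ((n : ℝ) * x) * f ((⌊(n : ℝ) * x⌋ + 1) / n)

lemma mem_Ico_div_iff {a b c x : ℝ} (hc : 0 < c) :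
    x ∈ Set.Ico (a / c) (b / c) ↔ a ≤ c * x ∧ c * x < b := by
  rw [Set.mem_Ico, div_le_iff₀ hc, lt_div_iff₀ hc, mul_comm x]

lemma abs_mul_sub_le_one_of_mem_Ico {n : ℕ} {k : ℤ} {x : ℝ}
    (hx : x ∈ Set.Ico (((k : ℝ) - 1) / n) (((k : ℝ) + 1) / n)) : |(n : ℝ) * x - k| ≤ 1 := by
  rcases n.eq_zero_or_pos with rfl | hn
  · simp at hx
  · obtain ⟨h₁, h₂⟩ := (mem_Ico_div_iff (Nat.cast_pos.mpr hn)).mp hx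
    exact abs_le.mpr ⟨by linarith, by linarith⟩

section Tent

variable {n : ℕ} {k : ℤ}

lemma tent_nonneg (x : ℝ) : 0 ≤ tent n k x :=
  Set.indicator_nonneg (fun _ hx => sub_nonneg.mpr (abs_mul_sub_le_one_of_mem_Ico hx)) x

lemma tent_le_one (x : ℝ) : tent n k x ≤ 1 :=
  Set.indicator_le' (fun _ _ => sub_le_self _ (abs_nonneg _)) (fun _ _ => zero_le_one) x

lemma measurable_tent : Measurable (tent n k) :=
  Measurable.indicator (by fun_prop) measurableSet_Ico

lemma integrable_tent (μ : Measure ℝ) [IsFiniteMeasure μ] : Integrable (tent n k) μ := by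
  refine (integrable_const 1).mono' measurable_tent.aestronglyMeasurable (.of_forall fun x => ?_)
  rw [Real.norm_of_nonneg (tent_nonneg x)]
  exact tent_le_one x

lemma integral_tent (μ : Measure ℝ) : ∫ x, tent n k x ∂μ = gridWeight μ n k :=
  integral_indicator measurableSet_Ico

lemma gridWeight_nonneg (μ : Measure ℝ) : 0 ≤ gridWeight μ n k :=
  integral_tent (k := k) μ ▸ integral_nonneg tent_nonneg

lemma lintegral_enorm_tent (μ : Measure ℝ) [IsFiniteMeasure μ] :
    ∫⁻ x, ‖tent n k x‖ₑ ∂μ = ENNReal.ofReal (gridWeight μ n k) := by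
  simp_rw [Real.enorm_eq_ofReal (tent_nonneg _)]
  rw [← ofReal_integral_eq_lintegral_ofReal (integrable_tent μ) (.of_forall tent_nonneg),
    integral_tent]

end Tent

section Partition

variable {n : ℕ}

lemma tent_floor (hn : 0 < n) (x : ℝ) : tent n ⌊(n : ℝ) * x⌋ x = 1 - Int.fract ((n : ℝ) * x) := by
  have h₁ := Int.floor_le ((n : ℝ) * x)
  have h₂ := Int.lt_floor_add_one ((n : ℝ) * x)
  rw [tent, Set.indicator_of_mem ((mem_Ico_div_iff (Nat.cast_pos.mpr hn)).mpr
    ⟨by linarith, h₂⟩), abs_of_nonneg (by linarith), Int.fract]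

lemma tent_floor_add_one (hn : 0 < n) (x : ℝ) : tent n (⌊(n : ℝ) * x⌋ + 1) x = Int.fract ((n : ℝ) * x) := by
  have h₁ := Int.floor_le ((n : ℝ) * x)
  have h₂ := Int.lt_floor_add_one ((n : ℝ) * x)
  rw [tent, Set.indicator_of_mem ((mem_Ico_div_iff (Nat.cast_pos.mpr hn)).mpr
    (by push_cast; constructor <;> linarith))]
  push_cast
  rw [abs_of_nonpos (by linarith), Int.fract]
  ring

lemma tent_eq_zero (hn : 0 < n) (x : ℝ) {k : ℤ} (h₀ : k ≠ ⌊(n : ℝ) * x⌋) (h₁ : k ≠ ⌊(n : ℝ) * x⌋ + 1) :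
    tent n k x = 0 := by
  refine Set.indicator_of_notMem (fun hx => ?_) _
  obtain ⟨hk₁, hk₂⟩ := (mem_Ico_div_iff (Nat.cast_pos.mpr hn)).mp hx
  have : k - 1 ≤ ⌊(n : ℝ) * x⌋ := Int.le_floor.mpr (by push_cast; linarith)
  have : ⌊(n : ℝ) * x⌋ < k + 1 := Int.floor_lt.mpr (by push_cast; linarith)
  omega

lemma tsum_tent_mul (hn : 0 < n) (x : ℝ) (f : ℝ → ℝ) : ∑' k : ℤ, tent n k x * f (k / n) = interp f n x := by
  rw [tsum_eq_sum (s := {⌊(n : ℝ) * x⌋, ⌊(n : ℝ) * x⌋ + 1}) fun k hk => by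
      simp only [Finset.mem_insert, Finset.mem_singleton, not_or] at hk
      rw [tent_eq_zero hn x hk.1 hk.2, zero_mul],
    Finset.sum_pair (by omega), tent_floor hn, tent_floor_add_one hn, interp]
  push_cast
  rfl

end Partition

lemma ConvexOn.add_slope_mul_le {f : ℝ → ℝ} (hf : ConvexOn ℝ Set.univ f) {a b z : ℝ}
    (hab : a < b) (hz : z ∉ Set.Ioo a b) : f a + (f b - f a) / (b - a) * (z - a) ≤ f z := by
  rcases lt_trichotomy z a with hza | rfl | haz
  · have := hf.secant_mono (Set.mem_univ a) (Set.mem_univ z) (Set.mem_univ b) hza.ne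
      hab.ne' (hza.trans hab).le
    rw [div_le_iff_of_neg (sub_neg.mpr hza)] at this
    linarith
  · simp
  · have hbz : b ≤ z := not_lt.mp fun hzb => hz ⟨haz, hzb⟩
    have := hf.secant_mono (Set.mem_univ a) (Set.mem_univ b) (Set.mem_univ z) hab.ne'
      haz.ne' hbz
    rw [le_div_iff₀ (sub_pos.mpr haz)] at this
    linarith

section Interpolation

variable {n : ℕ} {f : ℝ → ℝ}

/-- The secant line of `f` over `[k/n, (k+1)/n]`, in the variable `n x`. -/
lemma secant_le_interp (hn : 0 < n) (hf : ConvexOn ℝ Set.univ f) (k : ℤ) (x : ℝ) :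
    f (k / n) + (f ((k + 1) / n) - f (k / n)) * ((n : ℝ) * x - k) ≤ interp f n x := by
  have hN : (0 : ℝ) < n := Nat.cast_pos.mpr hn
  have hsecant : ∀ j : ℤ, f (k / n) + (f ((k + 1) / n) - f (k / n)) * (j - k) ≤ f (j / n) := by
    intro j
    have hgrid : (j / n : ℝ) ∉ Set.Ioo ((k : ℝ) / n) ((k + 1) / n) := by
      rintro ⟨h₁, h₂⟩
      rw [div_lt_div_iff_of_pos_right hN] at h₁ h₂
      have : k < j := by exact_mod_cast h₁
      have : j < k + 1 := by exact_mod_cast h₂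
      omega
    convert ConvexOn.add_slope_mul_le hf (div_lt_div_of_pos_right (lt_add_one (k : ℝ)) hN) hgrid
      using 2
    field_simp
    ring
  set m := ⌊(n : ℝ) * x⌋
  have ht₀ := Int.fract_nonneg ((n : ℝ) * x)
  have ht₁ := Int.fract_lt_one ((n : ℝ) * x)
  have hnx : (n : ℝ) * x = m + Int.fract ((n : ℝ) * x) := (Int.floor_add_fract _).symm
  have h₀ := mul_le_mul_of_nonneg_left (hsecant m) (sub_nonneg.mpr ht₁.le)
  have h₁ := mul_le_mul_of_nonneg_left (hsecant (m + 1)) ht₀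
  push_cast at h₁
  rw [interp]
  linear_combination h₀ + h₁ + (f ((k + 1) / n) - f (k / n)) * hnx

lemma convexOn_interp (hn : 0 < n) (hf : ConvexOn ℝ Set.univ f) :
    ConvexOn ℝ Set.univ (interp f n) := by
  refine ⟨convex_univ, fun x _ y _ a b ha hb hab => ?_⟩
  set m := ⌊(n : ℝ) * (a • x + b • y)⌋
  have hcell : interp f n (a • x + b • y) =
      f (m / n) + (f ((m + 1) / n) - f (m / n)) * ((n : ℝ) * (a • x + b • y) - m) := by
    rw [interp, ← Int.self_sub_floor]
    ring
  rw [hcell]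
  have hx := mul_le_mul_of_nonneg_left (secant_le_interp hn hf m x) ha
  have hy := mul_le_mul_of_nonneg_left (secant_le_interp hn hf m y) hb
  simp only [smul_eq_mul] at hx hy ⊢
  linear_combination hx + hy + ((f ((m + 1) / n) - f (m / n)) * m - f (m / n)) * hab

lemma measurable_interp (f : ℝ → ℝ) (n : ℕ) : Measurable (interp f n) := by
  have hfloor : Measurable fun x : ℝ => ⌊(n : ℝ) * x⌋ :=
    Int.measurable_floor.comp (measurable_const_mul _)
  have hfract : Measurable fun x : ℝ => Int.fract ((n : ℝ) * x) :=
    measurable_fract.comp (measurable_const_mul _)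
  have hleft := (measurable_of_countable fun k : ℤ => f (k / n)).comp hfloor
  have hright := (measurable_of_countable fun k : ℤ => f ((k + 1) / n)).comp hfloor
  exact ((measurable_const.sub hfract).mul hleft).add (hfract.mul hright)

end Interpolation

section Discretisation

lemma lintegral_enorm_gridDisc (μ : Measure ℝ) (n : ℕ) (f : ℝ → ℝ) :
    ∫⁻ x, ‖f x‖ₑ ∂gridDisc μ n = ∑' k : ℤ, ENNReal.ofReal (gridWeight μ n k) * ‖f (k / n)‖ₑ := by
  simp only [gridDisc, lintegral_sum_measure, lintegral_smul_measure, lintegral_dirac,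
    smul_eq_mul]

lemma tsum_lintegral_enorm_tent_mul (μ : Measure ℝ) [IsFiniteMeasure μ] (n : ℕ) (f : ℝ → ℝ) :
    ∑' k : ℤ, ∫⁻ x, ‖tent n k x * f (k / n)‖ₑ ∂μ = ∫⁻ x, ‖f x‖ₑ ∂gridDisc μ n := by
  rw [lintegral_enorm_gridDisc]
  refine tsum_congr fun k => ?_
  simp_rw [enorm_mul]
  rw [lintegral_mul_const _ measurable_tent.enorm, lintegral_enorm_tent]

lemma integral_gridDisc {μ : Measure ℝ} {n : ℕ} {f : ℝ → ℝ} (hf : Integrable f (gridDisc μ n)) :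
    ∫ x, f x ∂gridDisc μ n = ∑' k : ℤ, gridWeight μ n k * f (k / n) := by
  rw [gridDisc, integral_sum_measure hf]
  refine tsum_congr fun k => ?_
  rw [integral_smul_measure, integral_dirac, ENNReal.toReal_ofReal (gridWeight_nonneg μ),
    smul_eq_mul]

variable {μ : Measure ℝ} [IsFiniteMeasure μ] {n : ℕ} {f : ℝ → ℝ}

lemma integrable_interp (hn : 0 < n) (hf : Integrable f (gridDisc μ n)) :
    Integrable (interp f n) μ := by
  refine ⟨(measurable_interp f n).aestronglyMeasurable, ?_⟩
  calc ∫⁻ x, ‖interp f n x‖ₑ ∂μ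
      ≤ ∫⁻ x, ∑' k : ℤ, ‖tent n k x * f (k / n)‖ₑ ∂μ :=
        lintegral_mono fun x => tsum_tent_mul hn x f ▸ enorm_tsum_le_tsum_enorm
    _ = ∫⁻ x, ‖f x‖ₑ ∂gridDisc μ n := by
        rw [lintegral_tsum fun k => (measurable_tent.mul_const _).enorm.aemeasurable,
          tsum_lintegral_enorm_tent_mul]
    _ < ⊤ := hf.2

lemma integral_interp (hn : 0 < n) (hf : Integrable f (gridDisc μ n)) :
    ∫ x, interp f n x ∂μ = ∫ x, f x ∂gridDisc μ n := by
  simp_rw [← tsum_tent_mul hn _ f]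
  rw [integral_tsum (fun k => (measurable_tent.mul_const _).aestronglyMeasurable)
      (tsum_lintegral_enorm_tent_mul μ n f ▸ hf.2.ne), integral_gridDisc hf]
  refine tsum_congr fun k => ?_
  rw [integral_mul_const, integral_tent]

end Discretisation

theorem gridDisc_convexOrder_general (μ ν : Measure ℝ)
    (hμ : IsProbabilityMeasure μ) (hν : IsProbabilityMeasure ν)
    (hcx : ConvexOrder μ ν) (n : ℕ) (hn : 0 < n) :
    ConvexOrder (gridDisc μ n) (gridDisc ν n) := by
  intro f hf hfμ hfν
  rw [← integral_interp hn hfμ, ← integral_interp hn hfν]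
  exact hcx _ (convexOn_interp hn hf) (integrable_interp hn hfμ) (integrable_interp hn hfν)

/-- the grid discretisation preserves the convex order. -/
theorem gridDisc_convexOrder (μ ν : Measure ℝ)
    (hμ : IsProbabilityMeasure μ) (hν : IsProbabilityMeasure ν)
    (hmomμ : Integrable (fun x : ℝ => x) μ) (hmomν : Integrable (fun x : ℝ => x) ν)
    (hcx : ConvexOrder μ ν) (n : ℕ) (hn : 0 < n) :
    ConvexOrder (gridDisc μ n) (gridDisc ν n) :=
  gridDisc_convexOrder_general μ ν hμ hν hcx n hn

end MMOT
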